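/- arXiv:1705.03597 — 2 statements merged into one kernel-verified Lean document; each statement's English description precedes it below -/
import Mathlib

section
/- Let G be a finite nonempty linearly ordered set, Π₀ a finite nonempty set, and for each π ∈ Π₀ a probability mass function μ_π : G → ℝ with CDF F_π(g) = ∑_{g' ≤ g} μ_π(g') and strict CDF F⁻_π(g) = ∑_{g' < g} μ_π(g'). Let 0 < τ_1 < τ_2 < … < τ_L ≤ 1 and define recursively for i = 1, …, L: q*_i = max_{π ∈ Π_{i-1}} q_{τ_i}(F_π), and Π_i = {π ∈ Π_{i-1} : F⁻_π(q*_i) = min_{π' ∈ Π_{i-1}} F⁻_{π'}(q*_i)}. Then for every i = 1, …, L: Π_i is nonempty and q*_i = min{g ∈ G : min_{π ∈ Π_{i-1}} F_π(g) ≥ τ_i}, i.e. the optimal τ_i-quantile over Π_{i-1} equals the τ_i-lower quantile of the pointwise minimum of the CDFs over Π_{i-1}. -/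
open Classical

/-- The τ-lower quantile of `F : G → ℝ` on a finite nonempty linear order `G`:
the least `g` with `τ ≤ F g` (junk value `max G` if no such `g` exists). -/
noncomputable def lowQ {G : Type*} [Fintype G] [LinearOrder G] [Nonempty G]
    (τ : ℝ) (F : G → ℝ) : G :=
  if h : (Finset.univ.filter fun g => τ ≤ F g).Nonempty
  then (Finset.univ.filter fun g => τ ≤ F g).min' h
  else Finset.univ.max' Finset.univ_nonempty

/-- The CDF of a mass function `μ` on a finite linear order: `F(g) = ∑_{g' ≤ g} μ g'`. -/
noncomputable def cdf {G : Type*} [Fintype G] [LinearOrder G] (μ : G → ℝ) (g : G) : ℝ :=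
  ∑ g' ∈ Finset.univ.filter (fun g' => g' ≤ g), μ g'

/-- The strict CDF of a mass function `μ`: `F⁻(g) = ∑_{g' < g} μ g'`. -/
noncomputable def scdf {G : Type*} [Fintype G] [LinearOrder G] (μ : G → ℝ) (g : G) : ℝ :=
  ∑ g' ∈ Finset.univ.filter (fun g' => g' < g), μ g'

/-- The recursive construction: `qPi μ τ 0 = (junk, Π₀)` and, for `i ≥ 1`,
`qPi μ τ i = (q*_i, Π_i)` where `q*_i = max_{π ∈ Π_{i-1}} q_{τ_i}(F_π)` and
`Π_i` is the set of `π ∈ Π_{i-1}` minimizing the strict CDF `F⁻_π(q*_i)` over `Π_{i-1}`. -/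
noncomputable def qPi {G P : Type*} [Fintype G] [LinearOrder G] [Nonempty G] [Fintype P]
    (μ : P → G → ℝ) (τ : ℕ → ℝ) : ℕ → G × Finset P
  | 0 => (Classical.arbitrary G, Finset.univ)
  | i + 1 =>
    let prev := (qPi μ τ i).2
    let q := ((prev.image fun π => lowQ (τ (i + 1)) (cdf (μ π))).max).unbotD
      (Classical.arbitrary G)
    (q, prev.filter fun π => ∀ π' ∈ prev, scdf (μ π) q ≤ scdf (μ π') q)

/-!
For a monotone `F` reaching level `τ`, the lower quantile is a Galois-type adjoint:
`q_τ(F) ≤ g ↔ τ ≤ F g`. Hence `max_π q_τ(F_π) ≤ g` iff `τ ≤ F_π g` for every `π`, iff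
`τ ≤ min_π F_π g`, iff `q_τ(min_π F_π) ≤ g`. CDFs are monotone and reach `1 ≥ τ_i`, and each
`Π_i` is nonempty because it is the set of minimisers of a function on the nonempty `Π_{i-1}`.
-/

section Quantile

variable {G : Type*} [Fintype G] [LinearOrder G] [Nonempty G]

lemma lowQ_le {τ : ℝ} {F : G → ℝ} {g : G} (hg : τ ≤ F g) : lowQ τ F ≤ g := by
  have hne : (Finset.univ.filter fun g => τ ≤ F g).Nonempty := ⟨g, by simpa using hg⟩
  rw [lowQ, dif_pos hne]
  exact Finset.min'_le _ _ (by simpa using hg)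

lemma le_apply_lowQ {τ : ℝ} {F : G → ℝ} (h : ∃ g, τ ≤ F g) : τ ≤ F (lowQ τ F) := by
  obtain ⟨g, hg⟩ := h
  have hne : (Finset.univ.filter fun g => τ ≤ F g).Nonempty := ⟨g, by simpa using hg⟩
  rw [lowQ, dif_pos hne]
  simpa using Finset.min'_mem _ hne

lemma lowQ_le_iff {τ : ℝ} {F : G → ℝ} (hF : Monotone F) (h : ∃ g, τ ≤ F g) {g : G} :
    lowQ τ F ≤ g ↔ τ ≤ F g :=
  ⟨fun hg => (le_apply_lowQ h).trans (hF hg), lowQ_le⟩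

theorem max'_image_lowQ_eq_lowQ_inf' {P : Type*} {s : Finset P} (hs : s.Nonempty)
    {τ : ℝ} {F : P → G → ℝ} (hF : ∀ π ∈ s, Monotone (F π)) (hτ : ∀ π ∈ s, ∃ g, τ ≤ F π g) :
    (s.image fun π => lowQ τ (F π)).max' (hs.image _) = lowQ τ (fun g => s.inf' hs (F · g)) := by
  have hinf_mono : Monotone fun g => s.inf' hs (F · g) := fun g g' hg =>
    Finset.inf'_mono_fun fun π hπ => hF π hπ hg
  have hinf_le_iff : ∀ g, τ ≤ s.inf' hs (F · g) ↔ ∀ π ∈ s, τ ≤ F π g :=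
    fun g => Finset.le_inf'_iff hs _
  have hinf_top : ∃ g, τ ≤ s.inf' hs (F · g) := by
    obtain ⟨top, htop⟩ := Finite.exists_max (id : G → G)
    refine ⟨top, (hinf_le_iff top).2 fun π hπ => ?_⟩
    obtain ⟨g, hg⟩ := hτ π hπ
    exact hg.trans (hF π hπ (htop g))
  refine eq_of_forall_ge_iff fun g => ?_
  rw [Finset.max'_le_iff, Finset.forall_mem_image, lowQ_le_iff hinf_mono hinf_top, hinf_le_iff]
  exact forall₂_congr fun π hπ => lowQ_le_iff (hF π hπ) (hτ π hπ)

end Quantile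

section CDF

variable {G : Type*} [Fintype G] [LinearOrder G]

lemma cdf_mono {μ : G → ℝ} (hμ : ∀ g, 0 ≤ μ g) : Monotone (cdf μ) := fun _ _ hg =>
  Finset.sum_le_sum_of_subset_of_nonneg
    (Finset.monotone_filter_right _ fun _ _ h => le_trans h hg) fun g _ _ => hμ g

lemma cdf_of_isTop {μ : G → ℝ} {g : G} (hg : IsTop g) : cdf μ g = ∑ g', μ g' := by
  rw [cdf, Finset.filter_true_of_mem fun g' _ => hg g']

lemma exists_le_cdf [Nonempty G] {μ : G → ℝ} {τ : ℝ} (hτ : τ ≤ ∑ g, μ g) :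
    ∃ g, τ ≤ cdf μ g := by
  obtain ⟨top, htop⟩ := Finite.exists_max (id : G → G)
  exact ⟨top, by rwa [cdf_of_isTop (g := top) fun g => htop g]⟩

end CDF

section Recursion

variable {G P : Type*} [Fintype G] [LinearOrder G] [Nonempty G] [Fintype P]

lemma qPi_snd_nonempty [Nonempty P] (μ : P → G → ℝ) (τ : ℕ → ℝ) :
    ∀ i, (qPi μ τ i).2.Nonempty
  | 0 => Finset.univ_nonempty
  | i + 1 => by
    obtain ⟨π, hπ, hmin⟩ := (qPi μ τ i).2.exists_min_image
      (fun π => scdf (μ π) (qPi μ τ (i + 1)).1) (qPi_snd_nonempty μ τ i)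
    exact ⟨π, Finset.mem_filter.2 ⟨hπ, hmin⟩⟩

lemma qPi_succ_fst (μ : P → G → ℝ) (τ : ℕ → ℝ) (i : ℕ) (hne : (qPi μ τ i).2.Nonempty) :
    (qPi μ τ (i + 1)).1 =
      ((qPi μ τ i).2.image fun π => lowQ (τ (i + 1)) (cdf (μ π))).max' (hne.image _) := by
  show ((_ : Finset G).max).unbotD _ = _
  rw [← Finset.coe_max' (hne.image _), WithBot.unbotD_coe]

end Recursion

theorem qPi_nonempty_and_quantile_of_min_cdf_general
    {G P : Type*} [Fintype G] [LinearOrder G] [Nonempty G]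
    [Fintype P] [Nonempty P]
    (μ : P → G → ℝ)
    (hpos : ∀ π g, 0 ≤ μ π g) (hsum : ∀ π, ∑ g, μ π g = 1)
    (L : ℕ) (τ : ℕ → ℝ)
    (hτone : ∀ i, 1 ≤ i → i ≤ L → τ i ≤ 1) :
    ∀ i, 1 ≤ i → i ≤ L →
      ((qPi μ τ i).2).Nonempty ∧
      (qPi μ τ i).1 =
        lowQ (τ i) (fun g => sInf ((fun π => cdf (μ π) g) '' ((qPi μ τ (i - 1)).2 : Set P))) := by
  rintro (_ | j) hj hjL
  · omega
  have hne := qPi_snd_nonempty μ τ j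
  refine ⟨qPi_snd_nonempty μ τ (j + 1), ?_⟩
  have hreach : ∀ π ∈ (qPi μ τ j).2, ∃ g, τ (j + 1) ≤ cdf (μ π) g := fun π _ =>
    exists_le_cdf ((hτone _ hj hjL).trans (hsum π).ge)
  simp only [Nat.add_sub_cancel, ← Finset.inf'_eq_csInf_image _ hne]
  rw [qPi_succ_fst μ τ j hne,
    max'_image_lowQ_eq_lowQ_inf' hne (fun π _ => cdf_mono (hpos π)) hreach]

/-- each `Π_i` is nonempty and the optimal quantile `q*_i` over `Π_{i-1}`
equals the `τ_i`-lower quantile of the pointwise minimum of the CDFs over `Π_{i-1}`. -/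
theorem qPi_nonempty_and_quantile_of_min_cdf
    {G P : Type*} [Fintype G] [LinearOrder G] [Nonempty G]
    [Fintype P] [Nonempty P]
    (μ : P → G → ℝ)
    (hpos : ∀ π g, 0 ≤ μ π g) (hsum : ∀ π, ∑ g, μ π g = 1)
    (L : ℕ) (τ : ℕ → ℝ)
    (hτpos : ∀ i, 1 ≤ i → i ≤ L → 0 < τ i)
    (hτmono : ∀ i j, 1 ≤ i → i < j → j ≤ L → τ i < τ j)
    (hτone : ∀ i, 1 ≤ i → i ≤ L → τ i ≤ 1) :
    ∀ i, 1 ≤ i → i ≤ L →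
      ((qPi μ τ i).2).Nonempty ∧
      (qPi μ τ i).1 =
        lowQ (τ i) (fun g => sInf ((fun π => cdf (μ π) g) '' ((qPi μ τ (i - 1)).2 : Set P))) :=
  qPi_nonempty_and_quantile_of_min_cdf_general μ hpos hsum L τ hτone
end

section
/- Consider a finite-horizon multi-objective MDP with finite nonempty state type S, finite nonempty action type A, transition probabilities p, rewards R : Fin L → S → A → ℝ, and horizon T, with V* the values of the FLMDP backward recursion. Let π be any deterministic Markov policy and t < T. If for every state s the vector (V^π_1(t+1,s), …, V^π_L(t+1,s)) is lexicographically less than or equal to (V*_1(t+1,s), …, V*_L(t+1,s)), then for every state s the vector (V^π_1(t,s), …, V^π_L(t,s)) is lexicographically less than or equal to (V*_1(t,s), …, V*_L(t,s)). -/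
/-!
The lexicographic order on `Fin L → ℝ` is compatible with addition and with scaling by
nonnegative reals, so averaging the hypothesis over the transition kernel `p s (π_t s)` gives
`V^π(t, s) ≤_lex Q(t, s, π_t s)`. On the other hand `Q(t, s, a) ≤_lex V*(t, s)` for every action
`a`: if `Q_j(t, s, a) = V*_j(t, s)` for all `j < i`, then `a` survives the first `i` filtering
steps, so `a ∈ A_i(t, s)` and `Q_i(t, s, a) ≤ V*_i(t, s)`.
-/

open Classical

/-- Value functions of a deterministic Markov policy `pol` in a finite-horizon
multi-objective MDP, by backward recursion: `V^π_i(T,s) = 0` and, for `t < T`,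
`V^π_i(t,s) = R_i(s, π_t(s)) + ∑_{s'} p s (π_t(s)) s' · V^π_i(t+1,s')`. -/
noncomputable def Vpol {S A : Type*} [Fintype S] (p : S → A → S → ℝ) {L : ℕ}
    (R : Fin L → S → A → ℝ) (T : ℕ) (pol : ℕ → S → A) : ℕ → Fin L → S → ℝ
  | t => fun i s =>
    if h : t < T then
      R i s (pol t s) + ∑ s', p s (pol t s) s' * Vpol p R T pol (t + 1) i s'
    else 0
  termination_by t => T - t
  decreasing_by omega

/-- The FLMDP optimal value functions `V*`, by backward recursion: `V*_i(T,s) = 0`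
and, for `t < T`, `V*_i(t,s) = max_{a ∈ A_{i-1}(t,s)} Q_i(t,s,a)` where
`Q_i(t,s,a) = R_i(s,a) + ∑_{s'} p s a s' · V*_i(t+1,s')`, `A_0(t,s) = A`, and
`A_i(t,s)` is the set of maximizers of `Q_i(t,s,·)` over `A_{i-1}(t,s)`
(indices written 0-based via `Fin L`). -/
noncomputable def Vstar {S A : Type*} [Fintype S] [Fintype A] (p : S → A → S → ℝ) {L : ℕ}
    (R : Fin L → S → A → ℝ) (T : ℕ) : ℕ → Fin L → S → ℝ
  | t => fun i s =>
    if h : t < T then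
      sSup ((fun a => R i s a + ∑ s', p s a s' * Vstar p R T (t + 1) i s') ''
        ↑(Nat.rec (motive := fun _ => S → Finset A) (fun _ => (Finset.univ : Finset A))
            (fun j prev s => (prev s).filter fun a =>
              if hj : j < L then
                ∀ a' ∈ prev s,
                  (R ⟨j, hj⟩ s a' + ∑ s', p s a' s' * Vstar p R T (t + 1) ⟨j, hj⟩ s') ≤
                    (R ⟨j, hj⟩ s a + ∑ s', p s a s' * Vstar p R T (t + 1) ⟨j, hj⟩ s')
              else True)
            (i : ℕ) s))
    else 0
  termination_by t => T - t
  decreasing_by all_goals omega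

/-- The FLMDP state-action values `Q_i(t,s,a) = R_i(s,a) + ∑_{s'} p s a s' · V*_i(t+1,s')`
(0-based `i`). -/
noncomputable def Qstar {S A : Type*} [Fintype S] [Fintype A] (p : S → A → S → ℝ) {L : ℕ}
    (R : Fin L → S → A → ℝ) (T : ℕ) (t : ℕ) (i : Fin L) (s : S) (a : A) : ℝ :=
  R i s a + ∑ s', p s a s' * Vstar p R T (t + 1) i s'

/-- The FLMDP restricted action sets: `A_0(t,s) = A` and
`A_{j+1}(t,s) = {a ∈ A_j(t,s) : Q_{j+1}(t,s,a) maximal over A_j(t,s)}`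
(the `Q` index written 0-based). -/
noncomputable def Aset {S A : Type*} [Fintype S] [Fintype A] (p : S → A → S → ℝ) {L : ℕ}
    (R : Fin L → S → A → ℝ) (T : ℕ) (t : ℕ) : ℕ → S → Finset A
  | 0, _ => Finset.univ
  | j + 1, s =>
    if hj : j < L then
      (Aset p R T t j s).filter fun a =>
        ∀ a' ∈ Aset p R T t j s, Qstar p R T t ⟨j, hj⟩ s a' ≤ Qstar p R T t ⟨j, hj⟩ s a
    else Aset p R T t j s

namespace Pi

variable {ι : Type*} [LinearOrder ι]

theorem toLex_le_toLex_of_forall [WellFoundedLT ι] {β : ι → Type*} [∀ i, LinearOrder (β i)]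
    {x y : ∀ i, β i} (h : ∀ i, (∀ j < i, x j = y j) → x i ≤ y i) : toLex x ≤ toLex y := by
  by_contra hxy
  obtain ⟨i, hpre, hlt⟩ := not_le.mp hxy
  exact (h i fun j hj => (hpre j hj).symm).not_gt hlt

theorem toLex_smul_le_smul {𝕜 β : Type*} [Semiring 𝕜] [PartialOrder 𝕜] [AddCommMonoid β]
    [PartialOrder β] [Module 𝕜 β] [PosSMulStrictMono 𝕜 β] {c : 𝕜} (hc : 0 ≤ c)
    {x y : ι → β} (hxy : toLex x ≤ toLex y) : toLex (c • x) ≤ toLex (c • y) := by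
  rcases hc.eq_or_lt with rfl | hc
  · simp only [zero_smul, le_rfl]
  rcases hxy.eq_or_lt with hxy | ⟨i, hpre, hlt⟩
  · rw [toLex.injective hxy]
  · exact le_of_lt ⟨i, fun j hj => congrArg (c • ·) (hpre j hj), smul_lt_smul_of_pos_left hlt hc⟩

theorem toLex_sum_le_sum {κ β : Type*} [AddCommMonoid β] [PartialOrder β]
    [IsOrderedCancelAddMonoid β] (s : Finset κ) {f g : κ → ι → β}
    (h : ∀ k ∈ s, toLex (f k) ≤ toLex (g k)) :
    toLex (∑ k ∈ s, f k) ≤ toLex (∑ k ∈ s, g k) := by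
  rw [← coe_toLexAddEquiv, map_sum, map_sum]
  exact Finset.sum_le_sum h

end Pi

section FLMDP

variable {S A : Type*} [Fintype S] (p : S → A → S → ℝ) {L : ℕ} (R : Fin L → S → A → ℝ) (T : ℕ)

theorem Vpol_of_lt (pol : ℕ → S → A) {t : ℕ} (ht : t < T) (i : Fin L) (s : S) :
    Vpol p R T pol t i s =
      R i s (pol t s) + ∑ s', p s (pol t s) s' * Vpol p R T pol (t + 1) i s' := by
  rw [Vpol]
  simp only [dif_pos ht]

theorem Vpol_lex_le_Qstar [Fintype A] (hp0 : ∀ s a s', 0 ≤ p s a s') (pol : ℕ → S → A)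
    {t : ℕ} (ht : t < T)
    (hnext : ∀ s, toLex (fun i => Vpol p R T pol (t + 1) i s) ≤
        toLex (fun i => Vstar p R T (t + 1) i s)) (s : S) :
    toLex (fun i => Vpol p R T pol t i s) ≤ toLex (fun i => Qstar p R T t i s (pol t s)) := by
  have hsplit (a : A) (V : Fin L → S → ℝ) : (fun i => R i s a + ∑ s', p s a s' * V i s') =
      (fun i => R i s a) + ∑ s', p s a s' • fun i => V i s' := by
    ext i
    simp [Finset.sum_apply]
  simp only [Vpol_of_lt p R T pol ht, Qstar, hsplit]
  exact add_le_add le_rfl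
    (Pi.toLex_sum_le_sum _ fun s' _ => Pi.toLex_smul_le_smul (hp0 s _ s') (hnext s'))

variable [Fintype A]

theorem Vstar_rec_eq_Aset (t n : ℕ) (s : S) :
    (Nat.rec (motive := fun _ => S → Finset A) (fun _ => (Finset.univ : Finset A))
      (fun j prev s => (prev s).filter fun a =>
        if hj : j < L then
          ∀ a' ∈ prev s,
            (R ⟨j, hj⟩ s a' + ∑ s', p s a' s' * Vstar p R T (t + 1) ⟨j, hj⟩ s') ≤
              (R ⟨j, hj⟩ s a + ∑ s', p s a s' * Vstar p R T (t + 1) ⟨j, hj⟩ s')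
        else True) n s) = Aset p R T t n s := by
  induction n with
  | zero => rfl
  | succ n ih =>
    rw [Aset]
    split_ifs with hj
    · ext a
      simp only [Finset.mem_filter, dif_pos hj, ← ih]
      rfl
    · simp [hj, ← ih]

theorem Vstar_eq_sup' {t : ℕ} (ht : t < T) (i : Fin L) (s : S)
    (hne : (Aset p R T t i s).Nonempty) :
    Vstar p R T t i s = (Aset p R T t i s).sup' hne (Qstar p R T t i s) := by
  rw [Vstar]
  simp only [dif_pos ht, Vstar_rec_eq_Aset]
  rw [Finset.sup'_eq_csSup_image]
  rfl

theorem Qstar_le_Vstar {t : ℕ} (ht : t < T) {i : Fin L} {s : S} {a : A}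
    (ha : a ∈ Aset p R T t i s) : Qstar p R T t i s a ≤ Vstar p R T t i s := by
  rw [Vstar_eq_sup' p R T ht i s ⟨a, ha⟩]
  exact Finset.le_sup' _ ha

theorem mem_Aset_succ_iff {t : ℕ} (ht : t < T) {j : ℕ} (hj : j < L) {s : S} {a : A} :
    a ∈ Aset p R T t (j + 1) s ↔
      a ∈ Aset p R T t j s ∧ Qstar p R T t ⟨j, hj⟩ s a = Vstar p R T t ⟨j, hj⟩ s := by
  rw [Aset, dif_pos hj, Finset.mem_filter]
  refine and_congr_right fun ha => ?_
  rw [Vstar_eq_sup' p R T ht ⟨j, hj⟩ s ⟨a, ha⟩, ← Finset.sup'_le_iff ⟨a, ha⟩,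
    (Finset.le_sup' _ ha).ge_iff_eq, eq_comm]

theorem mem_Aset_of_forall_Qstar_eq {t : ℕ} (ht : t < T) {s : S} {a : A} {n : ℕ}
    (h : ∀ j : Fin L, (j : ℕ) < n → Qstar p R T t j s a = Vstar p R T t j s) :
    a ∈ Aset p R T t n s := by
  induction n with
  | zero => exact Finset.mem_univ a
  | succ n ih =>
    have ha := ih fun j hj => h j (hj.trans n.lt_succ_self)
    by_cases hn : n < L
    · exact (mem_Aset_succ_iff p R T ht hn).2 ⟨ha, h ⟨n, hn⟩ n.lt_succ_self⟩
    · rwa [Aset, dif_neg hn]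

theorem Qstar_lex_le_Vstar {t : ℕ} (ht : t < T) (s : S) (a : A) :
    toLex (fun i => Qstar p R T t i s a) ≤ toLex (fun i => Vstar p R T t i s) :=
  Pi.toLex_le_toLex_of_forall fun _ hpre =>
    Qstar_le_Vstar p R T ht (mem_Aset_of_forall_Qstar_eq p R T ht hpre)

end FLMDP

theorem lex_le_step_general
    {S A : Type*} [Fintype S] [Fintype A]
    (p : S → A → S → ℝ)
    (hp0 : ∀ s a s', 0 ≤ p s a s')
    {L : ℕ} (R : Fin L → S → A → ℝ) (T : ℕ)
    (pol : ℕ → S → A) (t : ℕ) (ht : t < T)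
    (hnext : ∀ s, toLex (fun i => Vpol p R T pol (t + 1) i s) ≤
        toLex (fun i => Vstar p R T (t + 1) i s)) :
    ∀ s, toLex (fun i => Vpol p R T pol t i s) ≤ toLex (fun i => Vstar p R T t i s) := fun s =>
  (Vpol_lex_le_Qstar p R T hp0 pol ht hnext s).trans (Qstar_lex_le_Vstar p R T ht s (pol t s))

/-- one-step propagation of lexicographic domination: if
`V^π(t+1, s) ≤_lex V*(t+1, s)` for every state `s`, then
`V^π(t, s) ≤_lex V*(t, s)` for every state `s`. -/
theorem lex_le_step
    {S A : Type*} [Fintype S] [Fintype A] [Nonempty S] [Nonempty A]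
    (p : S → A → S → ℝ)
    (hp0 : ∀ s a s', 0 ≤ p s a s') (hp1 : ∀ s a, ∑ s', p s a s' = 1)
    {L : ℕ} (R : Fin L → S → A → ℝ) (T : ℕ)
    (pol : ℕ → S → A) (t : ℕ) (ht : t < T)
    (hnext : ∀ s, toLex (fun i => Vpol p R T pol (t + 1) i s) ≤
        toLex (fun i => Vstar p R T (t + 1) i s)) :
    ∀ s, toLex (fun i => Vpol p R T pol t i s) ≤ toLex (fun i => Vstar p R T t i s) :=
  lex_le_step_general p hp0 R T pol t ht hnext
end
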